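/- (Coverage of the Clopper–Pearson lower confidence bound.) Fix n ≥ 1, α ∈ (0,1), and a true success probability p ∈ [0,1]. For x ∈ {0,…,n} define the lower confidence bound L(x) = sInf { q ∈ [0,1] : T(n, q, x) > α }, where T(n, q, x) is the Binomial(n, q) upper tail at x (so L(0) = 0). If X is distributed Binomial(n, p), then P(L(X) ≤ p) ≥ 1 − α. -/

import Mathlib

/-!
If `p < L(x)` then `p` is not in the set whose infimum is `L(x)`, so `T(n, p, x) ≤ α`.
The outcomes with `p < L(X)` all lie at or above the smallest such outcome `m`, so their
probability is at most `T(n, p, m) ≤ α`; no monotonicity of the tail in `q` is needed.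
-/

/-- The binomial upper tail `T(n, p, k) = Σ_{j=k}^{n} C(n,j) p^j (1−p)^{n−j}`. -/
noncomputable def binomTail (n : ℕ) (p : ℝ) (k : ℕ) : ℝ :=
  ∑ j ∈ Finset.Icc k n, (n.choose j : ℝ) * p ^ j * (1 - p) ^ (n - j)

/-- The binomial probability mass `P(X = j) = C(n,j) p^j (1−p)^{n−j}`. -/
noncomputable def binomProb (n : ℕ) (p : ℝ) (j : ℕ) : ℝ :=
  (n.choose j : ℝ) * p ^ j * (1 - p) ^ (n - j)

/-- The Clopper–Pearson lower confidence bound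
`L(x) = sInf { q ∈ [0,1] : T(n, q, x) > α }`. -/
noncomputable def cpLower (n : ℕ) (α : ℝ) (x : ℕ) : ℝ :=
  sInf {q : ℝ | q ∈ Set.Icc (0 : ℝ) 1 ∧ α < binomTail n q x}

open Finset

lemma binomProb_nonneg {p : ℝ} (hp : p ∈ Set.Icc (0 : ℝ) 1) (n j : ℕ) :
    0 ≤ binomProb n p j := by
  have h0 := hp.1
  have h1 : 0 ≤ 1 - p := sub_nonneg.mpr hp.2
  unfold binomProb
  positivity

lemma sum_range_binomProb (n : ℕ) (p : ℝ) :
    ∑ j ∈ range (n + 1), binomProb n p j = 1 := by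
  have h := (add_pow p (1 - p) n).symm
  rw [add_sub_cancel, one_pow] at h
  rw [← h]
  exact sum_congr rfl fun j _ => by unfold binomProb; ring

lemma binomTail_eq_sum_binomProb (n : ℕ) (p : ℝ) (k : ℕ) :
    binomTail n p k = ∑ j ∈ Icc k n, binomProb n p j := rfl

lemma binomTail_le_of_lt_cpLower {n x : ℕ} {α p : ℝ} (hp : p ∈ Set.Icc (0 : ℝ) 1)
    (h : p < cpLower n α x) : binomTail n p x ≤ α := by
  by_contra! hα
  have hbdd : BddBelow {q : ℝ | q ∈ Set.Icc (0 : ℝ) 1 ∧ α < binomTail n q x} :=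
    ⟨0, fun _ hq => hq.1.1⟩
  exact h.not_ge (csInf_le hbdd ⟨hp, hα⟩)

lemma sum_binomProb_le_binomTail {n k : ℕ} {p : ℝ} (hp : p ∈ Set.Icc (0 : ℝ) 1)
    {s : Finset ℕ} (hs : s ⊆ range (n + 1)) (hk : ∀ x ∈ s, k ≤ x) :
    ∑ x ∈ s, binomProb n p x ≤ binomTail n p k := by
  rw [binomTail_eq_sum_binomProb]
  refine sum_le_sum_of_subset_of_nonneg (fun x hx => ?_) fun j _ _ => binomProb_nonneg hp n j
  exact mem_Icc.mpr ⟨hk x hx, Nat.lt_succ_iff.mp (mem_range.mp (hs hx))⟩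

lemma sum_binomProb_le_of_binomTail_le {n : ℕ} {α p : ℝ} (hα : 0 ≤ α)
    (hp : p ∈ Set.Icc (0 : ℝ) 1) {s : Finset ℕ} (hs : s ⊆ range (n + 1))
    (htail : ∀ x ∈ s, binomTail n p x ≤ α) :
    ∑ x ∈ s, binomProb n p x ≤ α := by
  rcases s.eq_empty_or_nonempty with rfl | hne
  · simpa using hα
  · calc ∑ x ∈ s, binomProb n p x ≤ binomTail n p (s.min' hne) :=
          sum_binomProb_le_binomTail hp hs fun x hx => s.min'_le x hx
      _ ≤ α := htail _ (s.min'_mem hne)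

theorem clopper_pearson_coverage_general (n : ℕ)
    (α : ℝ) (hα : α ∈ Set.Ioo (0 : ℝ) 1) (p : ℝ) (hp : p ∈ Set.Icc (0 : ℝ) 1) :
    1 - α ≤ ∑ x ∈ (Finset.range (n + 1)).filter (fun x => cpLower n α x ≤ p),
      binomProb n p x := by
  have hmiss : ∑ x ∈ (range (n + 1)).filter (fun x => ¬cpLower n α x ≤ p),
      binomProb n p x ≤ α :=
    sum_binomProb_le_of_binomTail_le hα.1.le hp (filter_subset _ _) fun x hx =>
      binomTail_le_of_lt_cpLower hp (not_le.mp (mem_filter.mp hx).2)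
  have htotal := sum_filter_add_sum_filter_not (range (n + 1))
    (fun x => cpLower n α x ≤ p) (binomProb n p)
  rw [sum_range_binomProb] at htotal
  linarith

/-- Coverage of the Clopper–Pearson lower confidence bound: if `X ~ Binomial(n, p)`,
then `P(L(X) ≤ p) ≥ 1 − α`. -/
theorem clopper_pearson_coverage (n : ℕ) (hn : 1 ≤ n)
    (α : ℝ) (hα : α ∈ Set.Ioo (0 : ℝ) 1) (p : ℝ) (hp : p ∈ Set.Icc (0 : ℝ) 1) :
    1 - α ≤ ∑ x ∈ (Finset.range (n + 1)).filter (fun x => cpLower n α x ≤ p),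
      binomProb n p x :=
  clopper_pearson_coverage_general n α hα p hp
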